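/- arXiv:2207.03062 — 2 statements merged into one kernel-verified Lean document; each statement's English description precedes it below -/
import Mathlib

section
/- For a connected orthogonal convex shape S, the function x ↦ y_min(x) over nonempty columns is anti-unimodal: there do not exist columns x1 < x2 < x3, all nonempty, with y_min(x1) < y_min(x2) and y_min(x3) < y_min(x2). -/
def Adjacent (p q : ℤ × ℤ) : Prop :=
  (p.1 = q.1 ∧ (p.2 = q.2 + 1 ∨ q.2 = p.2 + 1)) ∨
  (p.2 = q.2 ∧ (p.1 = q.1 + 1 ∨ q.1 = p.1 + 1))

def ShapeConnected (S : Finset (ℤ × ℤ)) : Prop :=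
  ∀ p ∈ S, ∀ q ∈ S,
    Relation.ReflTransGen (fun a b => a ∈ S ∧ b ∈ S ∧ Adjacent a b) p q

def OrthoConvex (S : Finset (ℤ × ℤ)) : Prop :=
  (∀ p ∈ S, ∀ q ∈ S, p.1 = q.1 → ∀ y : ℤ,
      min p.2 q.2 < y → y < max p.2 q.2 → (p.1, y) ∈ S) ∧
  (∀ p ∈ S, ∀ q ∈ S, p.2 = q.2 → ∀ x : ℤ,
      min p.1 q.1 < x → x < max p.1 q.1 → (x, p.2) ∈ S)


/-- The set of y-coordinates of the column of `S` at abscissa `x`. -/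
def col (S : Finset (ℤ × ℤ)) (x : ℤ) : Finset ℤ :=
  (S.filter (fun p => p.1 = x)).image Prod.snd

/-!
Let `m` be the lowest height in column `x₂`, and suppose the columns `x₁ < x₂ < x₃` reach below
`m`. A path in `S` from the bottom of column `x₁` to the bottom of column `x₃` cannot cross
column `x₂` below `m`, so on each side of `x₂` it must climb through height `m - 1`. Row
convexity between these two points at height `m - 1` then puts `(x₂, m - 1)` into `S`, below
the minimum of column `x₂`.
-/

theorem Relation.ReflTransGen.exists_boundary_step {α : Type*} {r : α → α → Prop}
    {P : α → Prop} {a b : α} (h : Relation.ReflTransGen r a b) (ha : P a) (hb : ¬ P b) :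
    ∃ c d, r c d ∧ P c ∧ ¬ P d := by
  induction h with
  | refl => exact absurd ha hb
  | @tail c d _ hcd ih =>
    by_cases hc : P c
    · exact ⟨c, d, hcd, hc, hb⟩
    · exact ih hc

section Shape

variable {S : Finset (ℤ × ℤ)}

theorem mem_col {x y : ℤ} : y ∈ col S x ↔ (x, y) ∈ S := by
  simp [col]

theorem mk_min'_col_mem {x : ℤ} (h : (col S x).Nonempty) : (x, (col S x).min' h) ∈ S :=
  mem_col.mp ((col S x).min'_mem h)

theorem min'_col_le {x : ℤ} (h : (col S x).Nonempty) {b : ℤ × ℤ} (hb : b ∈ S) (hbx : b.1 = x) :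
    (col S x).min' h ≤ b.2 :=
  (col S x).min'_le _ (mem_col.mpr (hbx ▸ hb))

variable {x₀ m : ℤ} (hc : ShapeConnected S) (hmin : ∀ b ∈ S, b.1 = x₀ → m ≤ b.2)
include hc hmin

theorem ShapeConnected.exists_mem_left_of_le_col {p q : ℤ × ℤ} (hp : p ∈ S) (hq : q ∈ S)
    (hp₁ : p.1 < x₀) (hp₂ : p.2 < m) (hq₁ : x₀ ≤ q.1) :
    ∃ w ∈ S, w.1 < x₀ ∧ w.2 = m - 1 := by
  obtain ⟨a, b, ⟨ha, hb, hab⟩, ⟨ha₁, ha₂⟩, hb'⟩ :=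
    (hc p hp q hq).exists_boundary_step (P := fun a => a.1 < x₀ ∧ a.2 < m) ⟨hp₁, hp₂⟩
      (by omega)
  have := hmin b hb
  unfold Adjacent at hab
  exact ⟨a, ha, ha₁, by omega⟩

theorem ShapeConnected.exists_mem_right_of_le_col {p q : ℤ × ℤ} (hp : p ∈ S) (hq : q ∈ S)
    (hp₁ : x₀ < p.1) (hp₂ : p.2 < m) (hq₁ : q.1 ≤ x₀) :
    ∃ w ∈ S, x₀ < w.1 ∧ w.2 = m - 1 := by
  obtain ⟨a, b, ⟨ha, hb, hab⟩, ⟨ha₁, ha₂⟩, hb'⟩ :=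
    (hc p hp q hq).exists_boundary_step (P := fun a => x₀ < a.1 ∧ a.2 < m) ⟨hp₁, hp₂⟩
      (by omega)
  have := hmin b hb
  unfold Adjacent at hab
  exact ⟨a, ha, ha₁, by omega⟩

end Shape

/-- The column minima of a connected orthogonal convex shape are anti-unimodal. -/
theorem stmt3 (S : Finset (ℤ × ℤ)) (hc : ShapeConnected S) (ho : OrthoConvex S) :
    ¬ ∃ (x₁ x₂ x₃ : ℤ) (h₁ : (col S x₁).Nonempty) (h₂ : (col S x₂).Nonempty)
        (h₃ : (col S x₃).Nonempty),
      x₁ < x₂ ∧ x₂ < x₃ ∧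
      (col S x₁).min' h₁ < (col S x₂).min' h₂ ∧
      (col S x₃).min' h₃ < (col S x₂).min' h₂ := by
  rintro ⟨x₁, x₂, x₃, h₁, h₂, h₃, h₁₂, h₂₃, hm₁, hm₃⟩
  have hmin := fun b hb hbx => min'_col_le h₂ (b := b) hb hbx
  obtain ⟨w₁, hw₁, hw₁x, hw₁y⟩ := hc.exists_mem_left_of_le_col hmin
    (mk_min'_col_mem h₁) (mk_min'_col_mem h₃) h₁₂ hm₁ h₂₃.le
  obtain ⟨w₃, hw₃, hw₃x, hw₃y⟩ := hc.exists_mem_right_of_le_col hmin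
    (mk_min'_col_mem h₃) (mk_min'_col_mem h₁) h₂₃ hm₃ h₁₂.le
  have hrow : (x₂, w₁.2) ∈ S :=
    ho.2 w₁ hw₁ w₃ hw₃ (by omega) x₂ (by omega) (by omega)
  have := hmin _ hrow rfl
  omega
end

section
/- The diagonal line-with-leaves shape of n = 3k cells, consisting of k vertical columns of 3 cells each, where column i occupies cells (i, i), (i, i+1), (i, i+2) for 1 ≤ i ≤ k, is connected, orthogonal convex, and achieves colour-difference exactly n − 2⌊n/3⌋ = k under the chessboard colouring (assuming the columns are placed so each column's top and bottom cells share one colour). -/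
/-- Number of black cells (coordinate sum even). -/
def bcount (S : Finset (ℤ × ℤ)) : ℕ := (S.filter (fun p => (p.1 + p.2) % 2 = 0)).card

/-- Number of red cells (coordinate sum odd). -/
def rcount (S : Finset (ℤ × ℤ)) : ℕ := (S.filter (fun p => (p.1 + p.2) % 2 ≠ 0)).card

/-- The diagonal line-with-leaves with columns (i,i),(i,i+1),(i,i+2), 1 ≤ i ≤ k. -/
noncomputable def DLL (k : ℕ) : Finset (ℤ × ℤ) :=
  (Finset.Icc (1 : ℤ) (k : ℤ)).biUnion (fun i => {(i, i), (i, i + 1), (i, i + 2)})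

lemma mem_DLL {k : ℕ} {p : ℤ × ℤ} :
    p ∈ DLL k ↔ 1 ≤ p.1 ∧ p.1 ≤ (k : ℤ) ∧
      (p.2 = p.1 ∨ p.2 = p.1 + 1 ∨ p.2 = p.1 + 2) := by
  simp only [DLL, Finset.mem_biUnion, Finset.mem_Icc, Finset.mem_insert,
    Finset.mem_singleton, Prod.ext_iff]
  constructor
  · rintro ⟨i, ⟨h1, h2⟩, h⟩
    rcases h with ⟨ha, hb⟩ | ⟨ha, hb⟩ | ⟨ha, hb⟩ <;> subst ha <;> omega
  · rintro ⟨h1, h2, h⟩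
    exact ⟨p.1, ⟨h1, h2⟩, by rcases h with h | h | h <;> simp [h]⟩

lemma adj_symm {p q : ℤ × ℤ} (h : Adjacent p q) : Adjacent q p := by
  unfold Adjacent at *; omega

section
variable {k : ℕ}

abbrev R (k : ℕ) (a b : ℤ × ℤ) : Prop := a ∈ DLL k ∧ b ∈ DLL k ∧ Adjacent a b

lemma rtg_symm {a b : ℤ × ℤ} (h : Relation.ReflTransGen (R k) a b) :
    Relation.ReflTransGen (R k) b a := by
  induction h with
  | refl => exact .refl
  | tail hbc hcd ih => exact (Relation.ReflTransGen.single
      ⟨hcd.2.1, hcd.1, adj_symm hcd.2.2⟩).trans ih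

lemma step (a b : ℤ × ℤ) (ha : a ∈ DLL k) (hb : b ∈ DLL k) (hadj : Adjacent a b) :
    Relation.ReflTransGen (R k) a b := Relation.ReflTransGen.single ⟨ha, hb, hadj⟩

lemma col_mem (i : ℤ) (h1 : 1 ≤ i) (h2 : i ≤ (k : ℤ)) (d : ℤ)
    (hd : d = 0 ∨ d = 1 ∨ d = 2) : (i, i + d) ∈ DLL k := by
  rw [mem_DLL]; simp; omega

lemma to_base {p : ℤ × ℤ} (hp : p ∈ DLL k) :
    Relation.ReflTransGen (R k) p (p.1, p.1) := by
  obtain ⟨h1, h2, h⟩ := mem_DLL.mp hp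
  have m0 : (p.1, p.1) ∈ DLL k := by rw [mem_DLL]; simp; omega
  have m1 : (p.1, p.1 + 1) ∈ DLL k := by rw [mem_DLL]; simp; omega
  have m2 : (p.1, p.1 + 2) ∈ DLL k := by rw [mem_DLL]; simp; omega
  have s1 : Relation.ReflTransGen (R k) (p.1, p.1 + 1) (p.1, p.1) :=
    step _ _ m1 m0 (Or.inl ⟨rfl, Or.inl rfl⟩)
  have s2 : Relation.ReflTransGen (R k) (p.1, p.1 + 2) (p.1, p.1 + 1) :=
    step _ _ m2 m1 (Or.inl ⟨rfl, Or.inl (by ring)⟩)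
  rcases h with h | h | h
  · have : p = (p.1, p.1) := Prod.ext rfl h
    rw [this]
  · have : p = (p.1, p.1 + 1) := Prod.ext rfl h
    rw [this]; exact s1
  · have : p = (p.1, p.1 + 2) := Prod.ext rfl h
    rw [this]; exact s2.trans s1

lemma base_chain (j : ℕ) (h1 : 1 ≤ j) (h2 : j ≤ k) :
    Relation.ReflTransGen (R k) ((1 : ℤ), 1) ((j : ℤ), (j : ℤ)) := by
  induction j with
  | zero => omega
  | succ n ih =>
    rcases Nat.eq_or_lt_of_le h1 with h | h
    · exact h ▸ Relation.ReflTransGen.refl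
    · have hn1 : 1 ≤ n := by omega
      have hnk : n ≤ k := by omega
      have base := ih hn1 hnk
      set i : ℤ := (n : ℤ)
      have hi1 : 1 ≤ i := by simp [i]; omega
      have hik : i ≤ (k : ℤ) := by simp [i]; omega
      have hi1' : 1 ≤ i + 1 := by omega
      have hik' : i + 1 ≤ (k : ℤ) := by
        have : (n : ℤ) + 1 ≤ (k : ℤ) := by exact_mod_cast (by omega : n + 1 ≤ k)
        try omega
      have m0 := col_mem (k := k) i hi1 hik 0 (by omega)
      have m1 := col_mem (k := k) i hi1 hik 1 (by omega)
      have m2 := col_mem (k := k) i hi1 hik 2 (by omega)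
      have n1 : (i + 1, i + 2) ∈ DLL k := by rw [mem_DLL]; simp; omega
      have n0 : (i + 1, i + 1) ∈ DLL k := by rw [mem_DLL]; simp; omega
      simp only [add_zero] at m0
      have t1 : Relation.ReflTransGen (R k) (i, i) (i, i + 1) :=
        step _ _ m0 m1 (Or.inl ⟨rfl, Or.inr rfl⟩)
      have t2 : Relation.ReflTransGen (R k) (i, i + 1) (i, i + 2) :=
        step _ _ m1 m2 (Or.inl ⟨rfl, Or.inr (by ring)⟩)
      have t3 : Relation.ReflTransGen (R k) (i, i + 2) (i + 1, i + 2) :=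
        step _ _ m2 n1 (Or.inr ⟨rfl, Or.inr rfl⟩)
      have t4 : Relation.ReflTransGen (R k) (i + 1, i + 2) (i + 1, i + 1) :=
        step _ _ n1 n0 (Or.inl ⟨rfl, Or.inl (by ring)⟩)
      have : ((n : ℕ) + 1 : ℤ) = i + 1 := by push_cast [i]; ring
      have goal : Relation.ReflTransGen (R k) ((1:ℤ),1) (i + 1, i + 1) :=
        base.trans (t1.trans (t2.trans (t3.trans t4)))
      convert goal using 2 <;> push_cast [i] <;> ring

end

/-- The diagonal line-with-leaves of n = 3k cells is connected, orthogonal convex,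
and achieves colour-difference exactly k = n - 2⌊n/3⌋. -/
theorem stmt7 (k : ℕ) (hk : 1 ≤ k) :
    ShapeConnected (DLL k) ∧ OrthoConvex (DLL k) ∧ (DLL k).card = 3 * k ∧
    (bcount (DLL k) : ℤ) - (rcount (DLL k) : ℤ) = (k : ℤ) := by
  refine ⟨?_, ⟨?_, ?_⟩, ?_, ?_⟩
  · -- connected
    intro p hp q hq
    have hp' := mem_DLL.mp hp
    have hq' := mem_DLL.mp hq
    obtain ⟨a, ha⟩ : ∃ a : ℕ, (a : ℤ) = p.1 := ⟨p.1.toNat, by omega⟩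
    obtain ⟨b, hb⟩ : ∃ b : ℕ, (b : ℤ) = q.1 := ⟨q.1.toNat, by omega⟩
    have c1 : Relation.ReflTransGen (R k) ((1:ℤ),1) (p.1, p.1) := by
      have := base_chain (k := k) a (by omega) (by omega)
      rwa [ha] at this
    have c2 : Relation.ReflTransGen (R k) ((1:ℤ),1) (q.1, q.1) := by
      have := base_chain (k := k) b (by omega) (by omega)
      rwa [hb] at this
    exact (to_base hp).trans ((rtg_symm c1).trans (c2.trans (rtg_symm (to_base hq))))
  · -- vertical convexity
    intro p hp q hq hx y hy1 hy2
    have hp' := mem_DLL.mp hp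
    have hq' := mem_DLL.mp hq
    rw [mem_DLL]
    simp only [min_lt_iff, lt_max_iff] at *
    omega
  · -- horizontal convexity
    intro p hp q hq hy x hx1 hx2
    have hp' := mem_DLL.mp hp
    have hq' := mem_DLL.mp hq
    rw [mem_DLL]
    simp only at *
    omega
  · -- card
    rw [DLL, Finset.card_biUnion]
    · have hcard : ∀ i ∈ Finset.Icc (1:ℤ) (k:ℤ),
          ({(i, i), (i, i + 1), (i, i + 2)} : Finset (ℤ × ℤ)).card = 3 := by
        intro i _
        rw [Finset.card_insert_of_notMem (by simp [Prod.ext_iff]; try omega),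
          Finset.card_insert_of_notMem (by simp [Prod.ext_iff]; try omega),
          Finset.card_singleton]
      rw [Finset.sum_congr rfl hcard, Finset.sum_const, Int.card_Icc]
      simp [mul_comm]
      try omega
    · intro i _ j _ hij
      simp only [Finset.disjoint_left, Finset.mem_insert, Finset.mem_singleton]
      rintro a (rfl | rfl | rfl) <;> simp [Prod.ext_iff] <;> omega
  · -- counts
    have hb : bcount (DLL k) = 2 * k := by
      rw [bcount, DLL, Finset.filter_biUnion, Finset.card_biUnion]
      · have hcard : ∀ i ∈ Finset.Icc (1:ℤ) (k:ℤ),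
            (({(i, i), (i, i + 1), (i, i + 2)} : Finset (ℤ × ℤ)).filter
              (fun p => (p.1 + p.2) % 2 = 0)).card = 2 := by
          intro i _
          have : (({(i, i), (i, i + 1), (i, i + 2)} : Finset (ℤ × ℤ)).filter
              (fun p => (p.1 + p.2) % 2 = 0)) = {(i, i), (i, i + 2)} := by
            ext p
            simp [Prod.ext_iff]
            omega
          rw [this, Finset.card_insert_of_notMem (by simp [Prod.ext_iff]; try omega),
            Finset.card_singleton]
        rw [Finset.sum_congr rfl hcard, Finset.sum_const, Int.card_Icc]
        simp [mul_comm]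
        try omega
      · intro i _ j _ hij
        simp only [Finset.disjoint_left, Finset.mem_filter, Finset.mem_insert,
          Finset.mem_singleton]
        rintro a ⟨rfl | rfl | rfl, -⟩ <;> simp [Prod.ext_iff] <;> omega
    have hr : rcount (DLL k) = k := by
      rw [rcount, DLL, Finset.filter_biUnion, Finset.card_biUnion]
      · have hcard : ∀ i ∈ Finset.Icc (1:ℤ) (k:ℤ),
            (({(i, i), (i, i + 1), (i, i + 2)} : Finset (ℤ × ℤ)).filter
              (fun p => (p.1 + p.2) % 2 ≠ 0)).card = 1 := by
          intro i _
          have : (({(i, i), (i, i + 1), (i, i + 2)} : Finset (ℤ × ℤ)).filter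
              (fun p => (p.1 + p.2) % 2 ≠ 0)) = {(i, i + 1)} := by
            ext p
            simp [Prod.ext_iff]
            omega
          rw [this, Finset.card_singleton]
        rw [Finset.sum_congr rfl hcard, Finset.sum_const, Int.card_Icc]
        simp
        try omega
      · intro i _ j _ hij
        simp only [Finset.disjoint_left, Finset.mem_filter, Finset.mem_insert,
          Finset.mem_singleton]
        rintro a ⟨rfl | rfl | rfl, -⟩ <;> simp [Prod.ext_iff] <;> omega
    rw [hb, hr]
    push_cast
    ring
end
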